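/- arXiv:2107.02913 — 2 statements merged into one kernel-verified Lean document; each statement's English description precedes it below -/
import Mathlib

section
/- Under the hypotheses of the resolvent equation -ν̂ w'' + ν̂ k² w + i k (u - λ) w = F on the unit torus with u smooth and real-valued, one has the imaginary-part estimate: ‖(u - λ) w‖₂² ≤ 8 |k|^{-2} ‖F‖₂² + 2 ν̂ ‖u'‖_∞ |k|^{-1} ‖w'‖₂ ‖w‖₂. -/
open MeasureTheory intervalIntegral Set

-- interval integral of im
lemma my_ii_im {f : ℝ → ℂ} (hf : Continuous f) :
    (∫ x in (0:ℝ)..1, f x).im = ∫ x in (0:ℝ)..1, (f x).im := by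
  rw [intervalIntegral.integral_of_le zero_le_one,
    intervalIntegral.integral_of_le zero_le_one]
  simpa using (integral_im ((hf.intervalIntegrable 0 1).1)).symm

-- Cauchy-Schwarz
lemma my_cs2 (f g : ℝ → ℂ) (hf : Continuous f) (hg : Continuous g) :
    (∫ x in (0:ℝ)..1, ‖f x‖ * ‖g x‖) ≤
      Real.sqrt (∫ x in (0:ℝ)..1, ‖f x‖^2) * Real.sqrt (∫ x in (0:ℝ)..1, ‖g x‖^2) := by
  haveI : IsFiniteMeasure (volume.restrict (Set.Ioc (0:ℝ) 1)) :=
    ⟨by simp [Real.volume_Ioc]⟩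
  have h22 : Real.HolderConjugate 2 2 := Real.HolderConjugate.two_two
  have hmem : ∀ (f : ℝ → ℂ), Continuous f →
      MemLp f (ENNReal.ofReal 2) (volume.restrict (Set.Ioc (0:ℝ) 1)) := by
    intro f hf
    obtain ⟨C, hC⟩ := isCompact_Icc.exists_bound_of_continuousOn
      (hf.continuousOn : ContinuousOn f (Set.Icc (0:ℝ) 1))
    exact MemLp.of_bound hf.aestronglyMeasurable C
      ((MeasureTheory.ae_restrict_iff' measurableSet_Ioc).2 (Filter.Eventually.of_forall
        fun x hx => hC x (Set.Ioc_subset_Icc_self hx)))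
  have := MeasureTheory.integral_mul_norm_le_Lp_mul_Lq h22 (hmem f hf) (hmem g hg)
  rw [intervalIntegral.integral_of_le zero_le_one,
    intervalIntegral.integral_of_le zero_le_one,
    intervalIntegral.integral_of_le zero_le_one]
  calc ∫ x in Set.Ioc (0:ℝ) 1, ‖f x‖ * ‖g x‖ ≤
      (∫ x in Set.Ioc (0:ℝ) 1, ‖f x‖ ^ (2:ℝ)) ^ (1/2:ℝ) *
      (∫ x in Set.Ioc (0:ℝ) 1, ‖g x‖ ^ (2:ℝ)) ^ (1/2:ℝ) := this
    _ = Real.sqrt (∫ x in Set.Ioc (0:ℝ) 1, ‖f x‖^2) *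
        Real.sqrt (∫ x in Set.Ioc (0:ℝ) 1, ‖g x‖^2) := by
        rw [← Real.sqrt_eq_rpow, ← Real.sqrt_eq_rpow]
        simp_rw [show (2:ℝ) = ((2:ℕ):ℝ) by norm_num, Real.rpow_natCast]

theorem stmt7 (νh : ℝ) (hν : 0 < νh) (k : ℤ) (hk : k ≠ 0) (lam : ℝ)
    (u u' : ℝ → ℝ) (huper : Function.Periodic u 1)
    (hu' : ∀ x, HasDerivAt u (u' x) x) (hu'cont : Continuous u')
    (Ku : ℝ) (hKu : ∀ x, |u' x| ≤ Ku)
    (w w' w'' F : ℝ → ℂ)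
    (hwper : Function.Periodic w 1) (hFper : Function.Periodic F 1)
    (hw' : ∀ x, HasDerivAt w (w' x) x) (hw'' : ∀ x, HasDerivAt w' (w'' x) x)
    (hw''cont : Continuous w'') (hFcont : Continuous F)
    (heq : ∀ x : ℝ, -(νh:ℂ) * w'' x + (νh:ℂ) * (k:ℂ)^2 * w x
        + Complex.I * (k:ℂ) * ((u x : ℂ) - (lam:ℂ)) * w x = F x) :
    (∫ x in (0:ℝ)..1, ‖((u x : ℂ) - (lam:ℂ)) * w x‖^2)
      ≤ 8 / (k:ℝ)^2 * (∫ x in (0:ℝ)..1, ‖F x‖^2)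
        + 2 * νh * Ku / |(k:ℝ)|
          * Real.sqrt (∫ x in (0:ℝ)..1, ‖w' x‖^2)
          * Real.sqrt (∫ x in (0:ℝ)..1, ‖w x‖^2) := by
  -- basic continuity
  have hwc : Continuous w := by
    apply continuous_iff_continuousAt.2 (fun x => (hw' x).continuousAt)
  have hw'c : Continuous w' := by
    apply continuous_iff_continuousAt.2 (fun x => (hw'' x).continuousAt)
  have huc : Continuous u := by
    apply continuous_iff_continuousAt.2 (fun x => (hu' x).continuousAt)
  have hcw : Continuous (fun x => (starRingEnd ℂ) (w x)) := continuous_star.comp hwc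
  have hcw' : Continuous (fun x => (starRingEnd ℂ) (w' x)) := continuous_star.comp hw'c
  have hulc : Continuous (fun x => ((u x : ℂ) - (lam:ℂ))) :=
    (Complex.continuous_ofReal.comp huc).sub continuous_const
  set g : ℝ → ℂ := fun x => ((u x : ℂ) - (lam:ℂ)) * w x with hgdef
  have hgc : Continuous g := hulc.mul hwc
  have hcg : Continuous (fun x => (starRingEnd ℂ) (g x)) := continuous_star.comp hgc
  -- periodicity of w'
  have hw'per : Function.Periodic w' 1 := by
    intro x
    have h1 : HasDerivAt (fun y => w (y + 1)) (w' (x + 1)) x :=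
      HasDerivAt.comp_add_const x 1 (hw' (x+1))
    have h2 : (fun y => w (y + 1)) = w := funext fun y => hwper y
    rw [h2] at h1
    exact h1.unique (hw' x)
  -- real quantities
  set X : ℝ := ∫ x in (0:ℝ)..1, ‖g x‖^2 with hXdef
  set B : ℝ := ∫ x in (0:ℝ)..1, ‖F x‖^2 with hBdef
  set sw : ℝ := Real.sqrt (∫ x in (0:ℝ)..1, ‖w x‖^2) with hswdef
  set sw' : ℝ := Real.sqrt (∫ x in (0:ℝ)..1, ‖w' x‖^2) with hsw'def
  -- complex integrals
  set I1 : ℂ := ∫ x in (0:ℝ)..1, (starRingEnd ℂ) (g x) * F x with hI1def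
  set J : ℂ := ∫ x in (0:ℝ)..1, (u' x : ℂ) * ((starRingEnd ℂ) (w x) * w' x) with hJdef
  set P : ℂ := ∫ x in (0:ℝ)..1, ((u x : ℂ) - (lam:ℂ)) * ((starRingEnd ℂ) (w' x) * w' x)
    with hPdef
  set I2 : ℂ := ∫ x in (0:ℝ)..1, (starRingEnd ℂ) (g x) * w'' x with hI2def
  set I3 : ℂ := ∫ x in (0:ℝ)..1, (starRingEnd ℂ) (g x) * w x with hI3def
  set G : ℂ := ∫ x in (0:ℝ)..1, (starRingEnd ℂ) (g x) * g x with hGdef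
  -- step 1 : I1 = -ν I2 + ν k² I3 + I k G
  have hI1 : I1 = -(νh:ℂ) * I2 + ((νh:ℂ) * (k:ℂ)^2) * I3 + (Complex.I * (k:ℂ)) * G := by
    have hpt : ∀ x, (starRingEnd ℂ) (g x) * F x
        = -(νh:ℂ) * ((starRingEnd ℂ) (g x) * w'' x)
          + ((νh:ℂ) * (k:ℂ)^2) * ((starRingEnd ℂ) (g x) * w x)
          + (Complex.I * (k:ℂ)) * ((starRingEnd ℂ) (g x) * g x) := by
      intro x
      rw [← heq x]
      simp only [hgdef]
      ring
    erw [hI1def, intervalIntegral.integral_congr (fun x _ => hpt x),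
      intervalIntegral.integral_add
        (((continuous_const.mul (hcg.mul hw''cont)).add
          (continuous_const.mul (hcg.mul hwc))).intervalIntegrable 0 1)
        ((continuous_const.mul (hcg.mul hgc)).intervalIntegrable 0 1),
      intervalIntegral.integral_add
        ((continuous_const.mul (hcg.mul hw''cont)).intervalIntegrable 0 1)
        ((continuous_const.mul (hcg.mul hwc)).intervalIntegrable 0 1),
      intervalIntegral.integral_const_mul, intervalIntegral.integral_const_mul,
      intervalIntegral.integral_const_mul]
    rfl
  -- step 2 : integration by parts: I2 = -(J + P)
  have hibp : I2 = -(J + P) := by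
    set h : ℝ → ℂ := fun y => ((u y : ℂ) - (lam:ℂ)) * ((starRingEnd ℂ) (w y) * w' y)
      with hhdef
    set D : ℝ → ℂ := fun y => (u' y : ℂ) * ((starRingEnd ℂ) (w y) * w' y)
      + ((u y : ℂ) - (lam:ℂ)) * ((starRingEnd ℂ) (w' y) * w' y)
      + ((u y : ℂ) - (lam:ℂ)) * ((starRingEnd ℂ) (w y) * w'' y) with hDdef
    have hDer : ∀ x, HasDerivAt h (D x) x := by
      intro x
      have h1 : HasDerivAt (fun y => ((u y : ℂ) - (lam:ℂ))) ((u' x : ℂ)) x :=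
        ((hu' x).ofReal_comp).sub_const _
      have h2 : HasDerivAt (fun y => (starRingEnd ℂ) (w y)) ((starRingEnd ℂ) (w' x)) x :=
        (hw' x).star
      have h3 := (h2.mul (hw'' x))
      have := h1.mul h3
      convert this using 1
      · rfl
      · rfl
      · simp only [hDdef, Pi.mul_apply]
        ring
    have hu'cc : Continuous (fun x : ℝ => (u' x : ℂ)) := by
      exact Complex.continuous_ofReal.comp hu'cont
    have hDc : Continuous D :=
      ((hu'cc.mul (hcw.mul hw'c)).add (hulc.mul (hcw'.mul hw'c))).add
        (hulc.mul (hcw.mul hw''cont))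
    have hFTC : (∫ x in (0:ℝ)..1, D x) = h 1 - h 0 :=
      intervalIntegral.integral_eq_sub_of_hasDerivAt (fun x _ => hDer x)
        (hDc.intervalIntegrable 0 1)
    have hper : h 1 = h 0 := by
      have h1 : u 1 = u 0 := by simpa using huper 0
      have h2 : w 1 = w 0 := by simpa using hwper 0
      have h3 : w' 1 = w' 0 := by simpa using hw'per 0
      simp only [hhdef, h1, h2, h3]
    rw [hper, sub_self] at hFTC
    have hsplit : (∫ x in (0:ℝ)..1, D x) = J + P + (∫ x in (0:ℝ)..1,
        ((u x : ℂ) - (lam:ℂ)) * ((starRingEnd ℂ) (w x) * w'' x)) := by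
      erw [hDdef, hJdef, hPdef,
        intervalIntegral.integral_add
          (((hu'cc.mul (hcw.mul hw'c)).add (hulc.mul (hcw'.mul hw'c))).intervalIntegrable 0 1)
          ((hulc.mul (hcw.mul hw''cont)).intervalIntegrable 0 1),
        intervalIntegral.integral_add
          ((hu'cc.mul (hcw.mul hw'c)).intervalIntegrable 0 1)
          ((hulc.mul (hcw'.mul hw'c)).intervalIntegrable 0 1)]
      rfl
    have hlast : (∫ x in (0:ℝ)..1,
        ((u x : ℂ) - (lam:ℂ)) * ((starRingEnd ℂ) (w x) * w'' x)) = I2 := by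
      rw [hI2def]
      apply intervalIntegral.integral_congr
      intro x _
      simp only [hgdef, map_mul, map_sub, Complex.conj_ofReal]
      ring
    rw [hsplit, hlast] at hFTC
    linear_combination hFTC
  -- step 3 : G = X
  have hG : G = (X:ℂ) := by
    rw [hGdef, hXdef, ← intervalIntegral.integral_ofReal]
    apply intervalIntegral.integral_congr
    intro x _
    show (starRingEnd ℂ) (g x) * g x = ((‖g x‖^2 : ℝ) : ℂ)
    rw [mul_comm, Complex.mul_conj]
    norm_cast
    simp [Complex.normSq_eq_norm_sq]
  -- im of P and I3 vanish
  have him0 : ∀ (b : ℝ → ℂ) (x : ℝ),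
      (((u x : ℂ) - (lam:ℂ)) * ((starRingEnd ℂ) (b x) * b x)).im = 0 := by
    intro b x
    rw [mul_comm ((starRingEnd ℂ) (b x)) (b x), Complex.mul_conj,
      show ((u x : ℂ) - (lam:ℂ)) = ((u x - lam : ℝ) : ℂ) by push_cast; ring,
      ← Complex.ofReal_mul]
    exact Complex.ofReal_im _
  have hI3im : I3.im = 0 := by
    rw [hI3def, my_ii_im (f := fun x => (starRingEnd ℂ) (g x) * w x) (hcg.mul hwc)]
    have hpt : ∀ x, ((starRingEnd ℂ) (g x) * w x).im = 0 := by
      intro x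
      have hr : (starRingEnd ℂ) (g x) * w x
          = ((u x : ℂ) - (lam:ℂ)) * ((starRingEnd ℂ) (w x) * w x) := by
        simp only [hgdef, map_mul, map_sub, Complex.conj_ofReal]
        ring
      rw [hr]
      exact him0 w x
    simp [hpt]
  have hPim : P.im = 0 := by
    rw [hPdef, my_ii_im (f := fun x => ((u x : ℂ) - (lam:ℂ)) * ((starRingEnd ℂ) (w' x) * w' x)) (hulc.mul (hcw'.mul hw'c))]
    simp [him0 w']
  -- key identity
  have hkX : ((k:ℝ)) * X = I1.im - νh * J.im := by
    have h1 : I1 = (νh:ℂ) * J + (νh:ℂ) * P + ((νh * (k:ℝ)^2 : ℝ):ℂ) * I3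
        + Complex.I * (((k:ℝ) : ℂ)) * (X:ℂ) := by
      rw [hI1, hibp, hG]; push_cast; ring
    have h2 := congrArg Complex.im h1
    simp only [Complex.add_im, Complex.mul_im, Complex.mul_re, Complex.ofReal_re,
      Complex.ofReal_im, Complex.I_re, Complex.I_im, hI3im, hPim, zero_mul, mul_zero,
      add_zero, zero_add, one_mul, mul_one, sub_zero, zero_sub, neg_zero] at h2
    linarith [h2]
  -- bound on I1.im
  have hXnn : (0:ℝ) ≤ X := by
    rw [hXdef]
    apply intervalIntegral.integral_nonneg zero_le_one
    intro x _; positivity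
  have hBnn : (0:ℝ) ≤ B := by
    rw [hBdef]
    apply intervalIntegral.integral_nonneg zero_le_one
    intro x _; positivity
  have hI1b : |I1.im| ≤ Real.sqrt X * Real.sqrt B := by
    have h1 : |I1.im| ≤ ‖I1‖ := by
      exact Complex.abs_im_le_norm I1
    have h2 : ‖I1‖ ≤ ∫ x in (0:ℝ)..1, ‖(starRingEnd ℂ) (g x) * F x‖ := by
      rw [hI1def]
      exact intervalIntegral.norm_integral_le_integral_norm zero_le_one
    have h3 : (∫ x in (0:ℝ)..1, ‖(starRingEnd ℂ) (g x) * F x‖)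
        = ∫ x in (0:ℝ)..1, ‖g x‖ * ‖F x‖ := by
      apply intervalIntegral.integral_congr
      intro x _
      simp [norm_mul]
    have h4 := my_cs2 g F hgc hFcont
    rw [← hXdef, ← hBdef] at h4
    linarith
  -- bound on J.im
  have hKunn : (0:ℝ) ≤ Ku := le_trans (abs_nonneg _) (hKu 0)
  have hJb : |J.im| ≤ Ku * (Real.sqrt (∫ x in (0:ℝ)..1, ‖w x‖^2) * sw') := by
    have h1 : |J.im| ≤ ‖J‖ := by
      exact Complex.abs_im_le_norm J
    have h2 : ‖J‖ ≤ ∫ x in (0:ℝ)..1, ‖(u' x : ℂ) * ((starRingEnd ℂ) (w x) * w' x)‖ := by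
      rw [hJdef]
      exact intervalIntegral.norm_integral_le_integral_norm zero_le_one
    have h3 : (∫ x in (0:ℝ)..1, ‖(u' x : ℂ) * ((starRingEnd ℂ) (w x) * w' x)‖)
        ≤ ∫ x in (0:ℝ)..1, Ku * (‖w x‖ * ‖w' x‖) := by
      apply intervalIntegral.integral_mono_on zero_le_one
      · exact (((Complex.continuous_ofReal.comp hu'cont : Continuous fun x : ℝ => ((u' x : ℂ))).mul
          (hcw.mul hw'c)).norm).intervalIntegrable 0 1
      · exact (continuous_const.mul (hwc.norm.mul hw'c.norm)).intervalIntegrable 0 1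
      · intro x _
        rw [norm_mul, norm_mul, RCLike.norm_conj, Complex.norm_real]
        have h9 : ‖u' x‖ ≤ Ku := by rw [Real.norm_eq_abs]; exact hKu x
        exact mul_le_mul_of_nonneg_right h9 (by positivity)
    have h4 : (∫ x in (0:ℝ)..1, Ku * (‖w x‖ * ‖w' x‖))
        = Ku * ∫ x in (0:ℝ)..1, ‖w x‖ * ‖w' x‖ := intervalIntegral.integral_const_mul _ _
    have h5 := my_cs2 w w' hwc hw'c
    rw [← hsw'def] at h5
    have h6 : Ku * (∫ x in (0:ℝ)..1, ‖w x‖ * ‖w' x‖)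
        ≤ Ku * (Real.sqrt (∫ x in (0:ℝ)..1, ‖w x‖^2) * sw') :=
      mul_le_mul_of_nonneg_left h5 hKunn
    linarith
  rw [← hswdef] at hJb
  -- final algebra
  set K : ℝ := |(k:ℝ)| with hKdef
  have hK1 : (1:ℝ) ≤ K := by
    rw [hKdef, ← Int.cast_abs]
    exact_mod_cast Int.one_le_abs hk
  have hK0 : (0:ℝ) < K := lt_of_lt_of_le one_pos hK1
  have habs : K * X ≤ Real.sqrt X * Real.sqrt B + νh * (Ku * (sw * sw')) := by
    have e1 : K * X = |(k:ℝ) * X| := by rw [abs_mul, ← hKdef, abs_of_nonneg hXnn]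
    rw [e1, hkX]
    have tri : |I1.im - νh * J.im| ≤ |I1.im| + |νh * J.im| := by
      rw [sub_eq_add_neg]
      exact (abs_add_le _ _).trans (by rw [abs_neg])
    have h7 : |νh * J.im| = νh * |J.im| := by
      rw [abs_mul, abs_of_pos hν]
    have h8 : νh * |J.im| ≤ νh * (Ku * (sw * sw')) :=
      mul_le_mul_of_nonneg_left hJb (le_of_lt hν)
    calc |I1.im - νh * J.im| ≤ |I1.im| + |νh * J.im| := tri
      _ = |I1.im| + νh * |J.im| := by rw [h7]
      _ ≤ Real.sqrt X * Real.sqrt B + νh * (Ku * (sw * sw')) := by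
          exact add_le_add hI1b h8
  have hsX : Real.sqrt X ^ 2 = X := Real.sq_sqrt hXnn
  have hsB : Real.sqrt B ^ 2 = B := Real.sq_sqrt hBnn
  have hsXnn : 0 ≤ Real.sqrt X := Real.sqrt_nonneg _
  have hsBnn : 0 ≤ Real.sqrt B := Real.sqrt_nonneg _
  have hswnn : 0 ≤ sw := Real.sqrt_nonneg _
  have hsw'nn : 0 ≤ sw' := Real.sqrt_nonneg _
  have hcnn : 0 ≤ νh * (Ku * (sw * sw')) := by positivity
  have key : K^2 * X ≤ 8 * B + 2 * (νh * (Ku * (sw * sw'))) * K := by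
    nlinarith [mul_le_mul_of_nonneg_left habs (le_of_lt hK0),
      sq_nonneg (K * Real.sqrt X - Real.sqrt B), hcnn, hXnn, hBnn]
  have hkK : ((k:ℝ))^2 = K^2 := (sq_abs _).symm
  rw [hkK]
  have final : X ≤ (8 * B + 2 * (νh * (Ku * (sw * sw'))) * K) / K^2 := by
    rw [le_div_iff₀ (by positivity)]
    linarith [key]
  calc X ≤ (8 * B + 2 * (νh * (Ku * (sw * sw'))) * K) / K^2 := final
    _ = 8 / K^2 * B + 2 * νh * Ku / K * sw' * sw := by
        field_simp
end

section
/- Let f : [0,L] × [0,𝕃] → ℝ be smooth, periodic in x with zero x-average (∫₀^L f(x,y)dx = 0 for all y), and vanishing at y = 0. Then ‖f‖_{L^∞} ≤ C(L) ‖∂_x∂_y f‖_{L²}. -/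
open MeasureTheory Set

private lemma pos_on_of_ne_zero {g : ℝ → ℝ} {L : ℝ} (hg : Continuous g)
    (hc : ∀ s ∈ Icc (0:ℝ) L, g s ≠ 0) (h0 : 0 < g 0) :
    ∀ s ∈ Icc (0:ℝ) L, 0 < g s := by
  intro s hs
  by_contra hle
  push_neg at hle
  have hslt : g s < 0 := lt_of_le_of_ne hle (hc s hs)
  have h0m : (0:ℝ) ∈ uIcc (g 0) (g s) := by
    rw [mem_uIcc]; right; exact ⟨hslt.le, h0.le⟩
  obtain ⟨c, hc', hgc⟩ := intermediate_value_uIcc (a := 0) (b := s) hg.continuousOn h0m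
  have hcmem : c ∈ Icc (0:ℝ) L := by
    rw [uIcc_of_le hs.1] at hc'
    exact ⟨hc'.1, hc'.2.trans hs.2⟩
  exact hc c hcmem hgc

private lemma exists_zero_of_integral_zero {g : ℝ → ℝ} {L : ℝ} (hL : 0 < L)
    (hg : Continuous g) (h : (∫ x in (0:ℝ)..L, g x) = 0) :
    ∃ x₀ ∈ Icc (0:ℝ) L, g x₀ = 0 := by
  by_contra hcon
  push_neg at hcon
  have h0 : g 0 ≠ 0 := hcon 0 ⟨le_refl _, hL.le⟩
  rcases h0.lt_or_gt with hneg | hpos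
  · have hpos' := pos_on_of_ne_zero hg.neg
      (fun s hs => neg_ne_zero.mpr (hcon s hs)) (by simpa using hneg)
    have hlt := intervalIntegral.intervalIntegral_pos_of_pos_on ((hg.neg).intervalIntegrable 0 L)
      (fun t ht => hpos' t ⟨ht.1.le, ht.2.le⟩) hL
    simp only [Pi.neg_apply] at hlt
    rw [intervalIntegral.integral_neg, h] at hlt
    simp at hlt
  · have hpos' := pos_on_of_ne_zero hg hcon hpos
    have hlt := intervalIntegral.intervalIntegral_pos_of_pos_on (hg.intervalIntegrable 0 L)
      (fun t ht => hpos' t ⟨ht.1.le, ht.2.le⟩) hL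
    rw [h] at hlt
    exact lt_irrefl _ hlt

theorem stmt16 (L 𝕃 : ℝ) (hL : 0 < L) (h𝕃 : 0 < 𝕃) :
    ∃ C > 0, ∀ f fy fxy : ℝ × ℝ → ℝ,
      Continuous f → Continuous fxy →
      (∀ p : ℝ × ℝ, f (p.1 + L, p.2) = f p) →
      (∀ y : ℝ, (∫ x in (0:ℝ)..L, f (x, y)) = 0) →
      (∀ x : ℝ, f (x, 0) = 0) →
      (∀ p : ℝ × ℝ, HasDerivAt (fun y => f (p.1, y)) (fy p) p.2) →
      (∀ p : ℝ × ℝ, HasDerivAt (fun x => fy (x, p.2)) (fxy p) p.1) →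
      ∀ p ∈ Icc (0:ℝ) L ×ˢ Icc (0:ℝ) 𝕃,
        |f p| ≤ C * Real.sqrt (∫ q in Icc (0:ℝ) L ×ˢ Icc (0:ℝ) 𝕃, (fxy q)^2) := by
  refine ⟨Real.sqrt (L * 𝕃), Real.sqrt_pos.mpr (by positivity), ?_⟩
  intro f fy fxy hf hfxy _hper hmean h0 hdy hdx p hp
  obtain ⟨x, y⟩ := p
  obtain ⟨hpx, hpy⟩ := hp
  simp only at hpx hpy
  set S : Set (ℝ × ℝ) := Icc (0:ℝ) L ×ˢ Icc (0:ℝ) 𝕃 with hS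
  -- zero of f (·, y)
  obtain ⟨x₀, hx₀, hfx₀⟩ := exists_zero_of_integral_zero hL
    (hf.comp (continuous_id.prodMk continuous_const)) (hmean y)
  have hfx₀' : f (x₀, y) = 0 := hfx₀
  have hfxyc : ∀ t : ℝ, Continuous fun s => fxy (s, t) := fun t =>
    hfxy.comp (continuous_id.prodMk continuous_const)
  set H : ℝ → ℝ := fun t => ∫ s in x₀..x, fxy (s, t) with hH
  have hHc : Continuous H := by
    exact intervalIntegral.continuous_parametric_intervalIntegral_of_continuous'
      (f := fun t s => fxy (s, t)) (hfxy.comp continuous_swap) x₀ x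
  have hHeq : ∀ t, H t = fy (x, t) - fy (x₀, t) := fun t =>
    intervalIntegral.integral_eq_sub_of_hasDerivAt (f := fun s => fy (s, t))
      (f' := fun s => fxy (s, t))
      (fun s _ => hdx (s, t)) ((hfxyc t).intervalIntegrable _ _)
  have hkey : f (x, y) = ∫ t in (0:ℝ)..y, H t := by
    have h2 := intervalIntegral.integral_eq_sub_of_hasDerivAt
      (f := fun t => f (x, t) - f (x₀, t)) (f' := H)
      (fun t _ => by rw [hHeq t]; exact (hdy (x, t)).sub (hdy (x₀, t)))
      (hHc.intervalIntegrable 0 y)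
    rw [h2]
    simp [hfx₀', h0]
  -- bound |H t| by B t
  set B : ℝ → ℝ := fun t => ∫ s in Icc (0:ℝ) L, |fxy (s, t)| with hB
  have hBnn : ∀ t, 0 ≤ B t := fun t => integral_nonneg fun s => abs_nonneg _
  have hBeq : ∀ t, B t = ∫ s in (0:ℝ)..L, |fxy (s, t)| := fun t => by
    simp only [hB]
    rw [intervalIntegral.integral_of_le hL.le, integral_Icc_eq_integral_Ioc]
  have hBc : Continuous B := by
    have : B = fun t => ∫ s in (0:ℝ)..L, |fxy (s, t)| := funext hBeq
    rw [this]
    exact intervalIntegral.continuous_parametric_intervalIntegral_of_continuous'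
      (f := fun t s => |fxy (s, t)|) (hfxy.comp continuous_swap).abs 0 L
  have hHB : ∀ t, |H t| ≤ B t := by
    intro t
    calc |H t| ≤ ∫ s in Set.uIoc x₀ x, |fxy (s, t)| := by
          simpa using intervalIntegral.norm_integral_le_integral_norm_uIoc
            (a := x₀) (b := x) (f := fun s => fxy (s, t)) (μ := volume)
      _ ≤ B t := by
          apply setIntegral_mono_set ((hfxyc t).abs.integrableOn_Icc)
            (Filter.Eventually.of_forall fun s => abs_nonneg _)
          exact HasSubset.Subset.eventuallyLE
            (uIoc_subset_uIcc.trans (uIcc_subset_Icc hx₀ hpx))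
  have hBint : IntegrableOn B (Icc (0:ℝ) 𝕃) volume := hBc.integrableOn_Icc
  have step1 : |f (x, y)| ≤ ∫ t in Icc (0:ℝ) 𝕃, B t := by
    rw [hkey]
    calc |∫ t in (0:ℝ)..y, H t| ≤ ∫ t in (0:ℝ)..y, |H t| :=
        intervalIntegral.abs_integral_le_integral_abs hpy.1
      _ ≤ ∫ t in (0:ℝ)..y, B t :=
        intervalIntegral.integral_mono_on hpy.1 (hHc.abs.intervalIntegrable 0 y)
          (hBc.intervalIntegrable 0 y) (fun t _ => hHB t)
      _ = ∫ t in Ioc (0:ℝ) y, B t := intervalIntegral.integral_of_le hpy.1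
      _ ≤ ∫ t in Icc (0:ℝ) 𝕃, B t := by
          apply setIntegral_mono_set hBint
            (Filter.Eventually.of_forall fun t => hBnn t)
          exact HasSubset.Subset.eventuallyLE
            (fun t ht => ⟨ht.1.le, ht.2.trans hpy.2⟩)
  -- Fubini
  have hIntS : IntegrableOn (fun q : ℝ × ℝ => |fxy q|) S volume :=
    hfxy.abs.continuousOn.integrableOn_compact (isCompact_Icc.prod isCompact_Icc)
  have hswapint : Integrable (Function.uncurry fun t s => |fxy (s, t)|)
      ((volume.restrict (Icc (0:ℝ) 𝕃)).prod (volume.restrict (Icc (0:ℝ) L))) := by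
    rw [Measure.prod_restrict, ← Measure.volume_eq_prod]
    exact ((hfxy.comp continuous_swap).abs.continuousOn).integrableOn_compact
      (isCompact_Icc.prod isCompact_Icc)
  have hfub : (∫ t in Icc (0:ℝ) 𝕃, B t) = ∫ q in S, |fxy q| := by
    have h1 : (∫ t in Icc (0:ℝ) 𝕃, B t)
        = ∫ s in Icc (0:ℝ) L, ∫ t in Icc (0:ℝ) 𝕃, |fxy (s, t)| :=
      integral_integral_swap hswapint
    rw [h1, hS, Measure.volume_eq_prod, setIntegral_prod _ ?_]
    rw [← Measure.volume_eq_prod]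
    exact hIntS
  -- Cauchy–Schwarz
  haveI : IsFiniteMeasure (volume.restrict S) :=
    ⟨by rw [Measure.restrict_apply_univ]
        exact (isCompact_Icc.prod isCompact_Icc).measure_lt_top⟩
  have hvolS : (volume S).toReal = L * 𝕃 := by
    rw [hS, Measure.volume_eq_prod, Measure.prod_prod, Real.volume_Icc, Real.volume_Icc,
      sub_zero, sub_zero, ENNReal.toReal_mul,
      ENNReal.toReal_ofReal hL.le, ENNReal.toReal_ofReal h𝕃.le]
  have hCS : (∫ q in S, |fxy q|)
      ≤ Real.sqrt (L * 𝕃) * Real.sqrt (∫ q in S, (fxy q) ^ 2) := by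
    have hconj : Real.HolderConjugate 2 2 := Real.holderConjugate_iff.mpr ⟨one_lt_two, by norm_num⟩
    obtain ⟨M, hM⟩ := (isCompact_Icc.prod isCompact_Icc).exists_bound_of_continuousOn
      hfxy.continuousOn
    have h2 : MemLp (fun q => |fxy q|) (ENNReal.ofReal 2) (volume.restrict S) := by
      refine MemLp.of_bound hfxy.abs.aestronglyMeasurable.restrict M ?_
      rw [ae_restrict_iff' (measurableSet_Icc.prod measurableSet_Icc)]
      exact Filter.Eventually.of_forall fun q hq => by
        simpa [abs_abs] using hM q hq
    have h1 : MemLp (fun _ : ℝ × ℝ => (1:ℝ)) (ENNReal.ofReal 2) (volume.restrict S) :=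
      memLp_const 1
    have hcs := integral_mul_le_Lp_mul_Lq_of_nonneg hconj
      (Filter.Eventually.of_forall fun _ => zero_le_one)
      (Filter.Eventually.of_forall fun q => abs_nonneg _) h1 h2
    simp only [one_mul] at hcs
    have e1 : (∫ _ in S, (1:ℝ) ^ (2:ℝ)) = L * 𝕃 := by
      simp [Real.one_rpow, Measure.restrict_apply_univ, measureReal_def, hvolS]
    have e2 : (∫ q in S, |fxy q| ^ (2:ℝ)) = ∫ q in S, (fxy q) ^ 2 := by
      apply integral_congr_ae
      exact Filter.Eventually.of_forall fun q => by
        show |fxy q| ^ (2:ℝ) = (fxy q) ^ 2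
        rw [Real.rpow_two, sq_abs]
    rw [e1, e2] at hcs
    calc (∫ q in S, |fxy q|) ≤ (L * 𝕃) ^ ((1:ℝ)/2) * (∫ q in S, (fxy q) ^ 2) ^ ((1:ℝ)/2) := hcs
      _ = Real.sqrt (L * 𝕃) * Real.sqrt (∫ q in S, (fxy q) ^ 2) := by
          rw [← Real.sqrt_eq_rpow, ← Real.sqrt_eq_rpow]
  calc |f (x, y)| ≤ ∫ t in Icc (0:ℝ) 𝕃, B t := step1
    _ = ∫ q in S, |fxy q| := hfub
    _ ≤ Real.sqrt (L * 𝕃) * Real.sqrt (∫ q in S, (fxy q) ^ 2) := hCS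
end
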